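/- Let R be a commutative ring of prime characteristic p, 𝔞 an ideal of R, and k, l ∈ ℕ. Then 𝔞^[k+l] ⊆ 𝔞^[k] · 𝔞^[l], and equality holds if k and l add without carrying in base p (i.e., the sum of corresponding base-p digits of k and l is always less than p). -/

import Mathlib

open scoped BigOperators

/-- The `q`-th bracket power of an ideal: the ideal generated by `q`-th powers
of elements of `a`. -/
def bracketPow {R : Type*} [CommRing R] (a : Ideal R) (q : ℕ) : Ideal R :=
  Ideal.span ((fun x => x ^ q) '' (a : Set R))

/-- The generalized `k`-th Frobenius power of an ideal, defined via the base-`p`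
digits of `k`:  `𝔞^[k] = ∏ᵢ (𝔞^[pⁱ])^(kᵢ)` where `kᵢ = k / pⁱ % p` is the `i`-th
base-`p` digit of `k` (digits with index `> k` vanish, so the product below suffices). -/
def frobPow {R : Type*} [CommRing R] (p : ℕ) (a : Ideal R) (k : ℕ) : Ideal R :=
  ∏ i ∈ Finset.range (k + 1), bracketPow a (p ^ i) ^ (k / p ^ i % p)

/-!
Write `𝔞^[k] = 𝔞^(k₀) · (𝔞^[p])^[k / p]`, where `k₀ = k % p` is the lowest base-`p` digit.
If the lowest digits of `k` and `l` do not carry, this splits `𝔞^[k+l]` off as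
`𝔞^(k₀+l₀) · (𝔞^[p])^[k/p + l/p]`, and induction, applied to `𝔞^[p]`, finishes. If they carry,
`(k+l)/p = k/p + l/p + 1`, and the extra factor `(𝔞^[p])^[1] = 𝔞^[p] ⊆ 𝔞^p` is absorbed into
`𝔞^(k₀+l₀) = 𝔞^((k+l)₀ + p)`. When no digits carry at all, every digit of `k + l` is the sum of
those of `k` and `l`, so the defining products multiply factor by factor.
-/

namespace Nat

theorem add_div_pow_eq_of_forall_mod_add_lt {p k l : ℕ}
    (h : ∀ i, k / p ^ i % p + l / p ^ i % p < p) (i : ℕ) :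
    (k + l) / p ^ i = k / p ^ i + l / p ^ i := by
  induction i with
  | zero => simp
  | succ i ih =>
    simp only [pow_succ, ← Nat.div_div_eq_div_mul, ih, add_div_eq_of_add_mod_lt (h i)]

theorem div_pow_eq_zero_of_lt {p m i : ℕ} (hp : 1 < p) (h : m < i) : m / p ^ i = 0 :=
  Nat.div_eq_of_lt (h.trans (Nat.lt_pow_self hp))

end Nat

section bracketPow

variable {R : Type*} [CommRing R]

@[simp]
theorem bracketPow_one (a : Ideal R) : bracketPow a 1 = a := by
  simp [bracketPow]

theorem bracketPow_le_pow (a : Ideal R) (q : ℕ) : bracketPow a q ≤ a ^ q := by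
  rw [bracketPow, Ideal.span_le]
  rintro _ ⟨x, hx, rfl⟩
  exact Ideal.pow_mem_pow hx q

theorem bracketPow_pow_eq_map (p : ℕ) [ExpChar R p] (a : Ideal R) (n : ℕ) :
    bracketPow a (p ^ n) = a.map (iterateFrobenius R p n) :=
  rfl

theorem bracketPow_bracketPow (p : ℕ) [ExpChar R p] (a : Ideal R) (n : ℕ) :
    bracketPow (bracketPow a p) (p ^ n) = bracketPow a (p ^ (n + 1)) := by
  have h := bracketPow_pow_eq_map p a 1
  rw [pow_one] at h
  rw [h, bracketPow_pow_eq_map, bracketPow_pow_eq_map, Ideal.map_map, iterateFrobenius_add]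

end bracketPow

section frobPow

variable {R : Type*} [CommRing R] {p : ℕ}

theorem frobPow_eq_prod_range (hp : 1 < p) (a : Ideal R) {m N : ℕ} (hN : m < N) :
    frobPow p a m = ∏ i ∈ Finset.range N, bracketPow a (p ^ i) ^ (m / p ^ i % p) := by
  refine Finset.prod_subset (Finset.range_subset_range.2 hN) fun i _ hi => ?_
  rw [Finset.mem_range, not_lt] at hi
  rw [Nat.div_pow_eq_zero_of_lt hp hi, Nat.zero_mod, pow_zero]

@[simp]
theorem frobPow_zero (a : Ideal R) : frobPow p a 0 = 1 := by
  simp [frobPow]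

theorem frobPow_one (hp : 1 < p) (a : Ideal R) : frobPow p a 1 = a := by
  simp [frobPow, Finset.prod_range_succ, Nat.mod_eq_of_lt hp, Nat.div_eq_of_lt hp]

theorem frobPow_eq_pow_mul_frobPow_bracketPow (hp : 1 < p) [ExpChar R p] (a : Ideal R)
    (m : ℕ) : frobPow p a m = a ^ (m % p) * frobPow p (bracketPow a p) (m / p) := by
  rcases Nat.eq_zero_or_pos m with rfl | hm
  · simp
  rw [frobPow, Finset.prod_range_succ', frobPow_eq_prod_range hp _ (Nat.div_lt_self hm hp),
    mul_comm]
  simp only [pow_zero, Nat.div_one, bracketPow_one, bracketPow_bracketPow,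
    Nat.div_div_eq_div_mul, pow_succ']

theorem frobPow_add_le (hp : 1 < p) [ExpChar R p] (a : Ideal R) (k l : ℕ) :
    frobPow p a (k + l) ≤ frobPow p a k * frobPow p a l := by
  induction hn : k + l using Nat.strong_induction_on generalizing a k l with
  | _ n ih =>
  obtain rfl | hpos := n.eq_zero_or_pos
  · obtain ⟨rfl, rfl⟩ : k = 0 ∧ l = 0 := by omega
    simp
  subst hn
  set b := bracketPow a p
  have hlt : (k + l) / p < k + l := Nat.div_lt_self hpos hp
  have hle : k / p + l / p ≤ (k + l) / p := Nat.div_add_div_le_add_div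
  have split : a ^ (k % p + l % p) * frobPow p b (k / p + l / p) ≤
      frobPow p a k * frobPow p a l := by
    rw [frobPow_eq_pow_mul_frobPow_bracketPow hp a k,
      frobPow_eq_pow_mul_frobPow_bracketPow hp a l, pow_add]
    calc a ^ (k % p) * a ^ (l % p) * frobPow p b (k / p + l / p)
        ≤ a ^ (k % p) * a ^ (l % p) * (frobPow p b (k / p) * frobPow p b (l / p)) :=
          Ideal.mul_mono_right (ih _ (by omega) b _ _ rfl)
      _ = _ := by ring
  refine le_trans ?_ split
  rw [frobPow_eq_pow_mul_frobPow_bracketPow hp a (k + l)]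
  rcases lt_or_ge (k % p + l % p) p with hc | hc
  · rw [Nat.add_mod_of_add_mod_lt hc, Nat.add_div_eq_of_add_mod_lt hc]
  have hdiv := Nat.add_div_eq_of_le_mod_add_mod hc (by omega)
  rw [← Nat.add_mod_add_of_le_add_mod hc, hdiv, pow_add, mul_assoc]
  refine Ideal.mul_mono_right ?_
  calc frobPow p b (k / p + l / p + 1)
      ≤ frobPow p b (k / p + l / p) * frobPow p b 1 := ih _ (by omega) b _ _ rfl
    _ ≤ frobPow p b (k / p + l / p) * a ^ p := by
        rw [frobPow_one hp]
        exact Ideal.mul_mono_right (bracketPow_le_pow a p)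
    _ = a ^ p * frobPow p b (k / p + l / p) := mul_comm _ _

theorem frobPow_add_of_forall_mod_add_lt (hp : 1 < p) (a : Ideal R) {k l : ℕ}
    (h : ∀ i, k / p ^ i % p + l / p ^ i % p < p) :
    frobPow p a (k + l) = frobPow p a k * frobPow p a l := by
  rw [frobPow_eq_prod_range hp a (Nat.lt_succ_self (k + l)),
    frobPow_eq_prod_range hp a (m := k) (N := k + l + 1) (by omega),
    frobPow_eq_prod_range hp a (m := l) (N := k + l + 1) (by omega),
    ← Finset.prod_mul_distrib]
  refine Finset.prod_congr rfl fun i _ => ?_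
  rw [← pow_add, Nat.add_div_pow_eq_of_forall_mod_add_lt h, Nat.add_mod_of_add_mod_lt (h i)]

end frobPow

theorem stmt_4 {R : Type*} [CommRing R] (p : ℕ) (hp : p.Prime) [CharP R p]
    (a : Ideal R) (k l : ℕ) :
    frobPow p a (k + l) ≤ frobPow p a k * frobPow p a l ∧
      ((∀ i, k / p ^ i % p + l / p ^ i % p < p) →
        frobPow p a (k + l) = frobPow p a k * frobPow p a l) := by
  have : ExpChar R p := ExpChar.prime hp
  exact ⟨frobPow_add_le hp.one_lt a k l, frobPow_add_of_forall_mod_add_lt hp.one_lt a⟩
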